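/- arXiv:2504.05688 — 7 statements merged into one kernel-verified Lean document; each statement's English description precedes it below -/
import Mathlib

section
/- Let b_0 + b_1 x + ... + b_{φ(n)} x^{φ(n)} be the n-th cyclotomic polynomial (n ≥ 2). Then the vectors v_i := Σ_{j=0}^{φ(n)} b_j e_{i+j} ∈ ℚ^n for 0 ≤ i ≤ n - φ(n) - 1 form a basis of the ℚ-vector space V_n = {α ∈ ℚ^n : Σ α_i ζ_n^i = 0}. -/
open Polynomial
set_option maxHeartbeats 1000000

/-- The shifts of the coefficient vector of the `n`-th cyclotomic polynomial form a
basis of `V_n = {α ∈ ℚ^n : ∑ α_i ζ_n^i = 0}`. -/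
theorem stmt1 (n : ℕ) (hn : 2 ≤ n) (ζ : ℂ) (hζ : IsPrimitiveRoot ζ n)
    (V : Submodule ℚ (Fin n → ℚ))
    (hV : ∀ α : Fin n → ℚ, α ∈ V ↔ ∑ i : Fin n, (α i : ℂ) * ζ ^ (i : ℕ) = 0)
    (v : Fin (n - Nat.totient n) → (Fin n → ℚ))
    (hv : ∀ i j, v i j = if (i : ℕ) ≤ (j : ℕ)
      then (Polynomial.cyclotomic n ℚ).coeff ((j : ℕ) - (i : ℕ)) else 0) :
    LinearIndependent ℚ v ∧ Submodule.span ℚ (Set.range v) = V := by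
  classical
  have hphlt : Nat.totient n < n := Nat.totient_lt n (by omega)
  have hdeg : (cyclotomic n ℚ).natDegree = Nat.totient n := natDegree_cyclotomic n ℚ
  have hc0 : (cyclotomic n ℚ).coeff 0 = 1 := cyclotomic_coeff_zero ℚ hn
  -- evaluation lemma
  have keyL : ∀ P : ℚ[X], P.natDegree < n →
      ∑ j : Fin n, ((P.coeff (j : ℕ) : ℚ) : ℂ) * ζ ^ (j : ℕ) = aeval ζ P := by
    intro P hP
    rw [aeval_eq_sum_range' hP, ← Fin.sum_univ_eq_sum_range]
    refine Finset.sum_congr rfl fun j _ => ?_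
    rw [Rat.smul_def]
  have hroot : aeval ζ (cyclotomic n ℚ) = 0 := by
    rw [aeval_def, eval₂_eq_eval_map, map_cyclotomic]
    exact hζ.isRoot_cyclotomic (by omega)
  -- each v i lies in V
  have hmem : ∀ i : Fin (n - Nat.totient n), v i ∈ V := by
    intro i
    rw [hV]
    have hdeg' : (cyclotomic n ℚ * X ^ (i : ℕ)).natDegree < n := by
      rw [natDegree_mul (cyclotomic_ne_zero n ℚ) (pow_ne_zero _ X_ne_zero),
        natDegree_X_pow, hdeg]
      have := i.isLt
      omega
    have hco : ∀ j : Fin n, v i j = (cyclotomic n ℚ * X ^ (i : ℕ)).coeff (j : ℕ) := by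
      intro j
      rw [hv, coeff_mul_X_pow']
    calc ∑ j : Fin n, ((v i j : ℚ) : ℂ) * ζ ^ (j : ℕ)
        = ∑ j : Fin n, (((cyclotomic n ℚ * X ^ (i : ℕ)).coeff (j : ℕ) : ℚ) : ℂ) * ζ ^ (j : ℕ) :=
          Finset.sum_congr rfl fun j _ => by rw [hco j]
      _ = aeval ζ (cyclotomic n ℚ * X ^ (i : ℕ)) := keyL _ hdeg'
      _ = 0 := by rw [map_mul, hroot, zero_mul]
  constructor
  · -- linear independence
    rw [Fintype.linearIndependent_iff]
    intro g hg
    suffices H : ∀ N : ℕ, ∀ i : Fin (n - Nat.totient n), (i : ℕ) = N → g i = 0 by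
      exact fun i => H i i rfl
    intro N
    induction N using Nat.strong_induction_on with
    | _ N IH =>
      intro i hi
      have hj : (i : ℕ) < n := lt_of_lt_of_le i.isLt (Nat.sub_le n (Nat.totient n))
      have h0 := congrFun hg ⟨(i : ℕ), hj⟩
      rw [Finset.sum_apply] at h0
      simp only [Pi.smul_apply, smul_eq_mul, Pi.zero_apply] at h0
      have hsum : ∑ k : Fin (n - Nat.totient n), g k * v k ⟨(i : ℕ), hj⟩ = g i := by
        rw [Finset.sum_eq_single i]
        · rw [hv]
          simp [hc0]
        · intro k _ hk
          rcases lt_or_gt_of_ne (fun h : (k : ℕ) = (i : ℕ) => hk (Fin.ext h)) with h | h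
          · rw [IH k (by omega) k rfl, zero_mul]
          · rw [hv]
            simp only [if_neg (by simp; omega : ¬ (k : ℕ) ≤ ((⟨(i : ℕ), hj⟩ : Fin n) : ℕ))]
            rw [mul_zero]
        · intro h
          exact absurd (Finset.mem_univ i) h
      rw [hsum] at h0
      exact h0
  · -- span = V
    apply le_antisymm
    · rw [Submodule.span_le]
      rintro _ ⟨i, rfl⟩
      exact hmem i
    · intro α hα
      rw [hV] at hα
      set P : ℚ[X] := ∑ j : Fin n, C (α j) * X ^ (j : ℕ) with hPdef
      have hPdeg : P.natDegree < n := by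
        have : P.natDegree ≤ n - 1 := by
          apply Polynomial.natDegree_sum_le_of_forall_le
          intro j _
          exact le_trans (natDegree_C_mul_le _ _) (by simp [natDegree_X_pow]; omega)
        omega
      have hcoeff : ∀ j : Fin n, P.coeff (j : ℕ) = α j := by
        intro j
        rw [hPdef, finset_sum_coeff, Finset.sum_eq_single j]
        · simp
        · intro k _ hk
          rw [coeff_C_mul, coeff_X_pow, if_neg (by simpa using fun h => hk (Fin.ext h.symm)),
            mul_zero]
        · intro h; exact absurd (Finset.mem_univ j) h
      have h0 : aeval ζ P = 0 := by
        rw [← keyL P hPdeg]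
        calc ∑ j : Fin n, ((P.coeff (j : ℕ) : ℚ) : ℂ) * ζ ^ (j : ℕ)
            = ∑ j : Fin n, ((α j : ℚ) : ℂ) * ζ ^ (j : ℕ) :=
              Finset.sum_congr rfl fun j _ => by rw [hcoeff j]
          _ = 0 := hα
      have hdvd : cyclotomic n ℚ ∣ P := by
        rw [cyclotomic_eq_minpoly_rat hζ (by omega)]
        exact minpoly.dvd ℚ ζ h0
      obtain ⟨Q, hQ⟩ := hdvd
      rw [mul_comm] at hQ
      have hQc : ∀ k : ℕ, n - Nat.totient n ≤ k → Q.coeff k = 0 := by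
        intro k hk
        rcases eq_or_ne Q 0 with h | h
        · simp [h]
        · apply coeff_eq_zero_of_natDegree_lt
          have : P.natDegree = Q.natDegree + Nat.totient n := by
            rw [hQ, natDegree_mul h (cyclotomic_ne_zero n ℚ), hdeg]
          omega
      have hαeq : α = ∑ i : Fin (n - Nat.totient n), Q.coeff (i : ℕ) • v i := by
        funext j
        have lhs : α j = ∑ k ∈ Finset.range ((j : ℕ) + 1),
            Q.coeff k * (cyclotomic n ℚ).coeff ((j : ℕ) - k) := by
          rw [← hcoeff j, hQ, coeff_mul,
            Finset.Nat.sum_antidiagonal_eq_sum_range_succ_mk]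
        have e1 : (∑ k ∈ Finset.range ((j : ℕ) + 1),
              Q.coeff k * (cyclotomic n ℚ).coeff ((j : ℕ) - k))
            = ∑ k ∈ Finset.range n,
              Q.coeff k * (if k ≤ (j : ℕ) then (cyclotomic n ℚ).coeff ((j : ℕ) - k) else 0) :=
          calc (∑ k ∈ Finset.range ((j : ℕ) + 1),
                Q.coeff k * (cyclotomic n ℚ).coeff ((j : ℕ) - k))
              = ∑ k ∈ Finset.range ((j : ℕ) + 1),
                Q.coeff k * (if k ≤ (j : ℕ) then (cyclotomic n ℚ).coeff ((j : ℕ) - k) else 0) :=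
                Finset.sum_congr rfl fun k hk => by
                  rw [if_pos (by simpa [Nat.lt_succ_iff] using Finset.mem_range.mp hk)]
            _ = ∑ k ∈ Finset.range n,
                Q.coeff k * (if k ≤ (j : ℕ) then (cyclotomic n ℚ).coeff ((j : ℕ) - k) else 0) :=
                Finset.sum_subset (Finset.range_subset_range.mpr (by omega : (j : ℕ) + 1 ≤ n))
                  (fun k _ hk => by
                    rw [if_neg (by simpa [Nat.lt_succ_iff] using hk), mul_zero])
        have e2 : (∑ k ∈ Finset.range n,
              Q.coeff k * (if k ≤ (j : ℕ) then (cyclotomic n ℚ).coeff ((j : ℕ) - k) else 0))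
            = ∑ k ∈ Finset.range (n - Nat.totient n),
              Q.coeff k * (if k ≤ (j : ℕ) then (cyclotomic n ℚ).coeff ((j : ℕ) - k) else 0) :=
          (Finset.sum_subset (Finset.range_subset_range.mpr (Nat.sub_le n (Nat.totient n)))
            (fun k _ hk => by
              rw [hQc k (by simpa using hk), zero_mul])).symm
        rw [lhs, e1, e2, Finset.sum_apply, ← Fin.sum_univ_eq_sum_range
          (fun k => Q.coeff k * (if k ≤ (j : ℕ) then (cyclotomic n ℚ).coeff ((j : ℕ) - k) else 0))
          (n - Nat.totient n)]
        refine Finset.sum_congr rfl fun k _ => ?_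
        rw [Pi.smul_apply, smul_eq_mul, hv]
      rw [hαeq]
      exact Submodule.sum_mem _ fun i _ =>
        Submodule.smul_mem _ _ (Submodule.subset_span ⟨i, rfl⟩)
end

section
/- Let p and q be coprime positive integers with pq | n. If Σ_{i=0}^{n_{pq}-1} Σ_{j=0}^{q-1} c_{i,j} v^(p)_{i + n_{pq} j} = Σ_{i=0}^{n_{pq}-1} Σ_{j=0}^{p-1} d_{i,j} v^(q)_{i + n_{pq} j} holds in ℚ^n for some rationals c_{i,j}, d_{i,j}, then for each fixed i one has c_{i,0} = c_{i,1} = ... = c_{i,q-1} = d_{i,0} = d_{i,1} = ... = d_{i,p-1}. -/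
/-- The `k`-th standard basis vector of `ℚ^n`. -/
def stdVecQ (n : ℕ) (k : ℕ) : Fin n → ℚ := fun m => if (m : ℕ) = k then 1 else 0

/-- `v^(d)_i = ∑_{j=0}^{d-1} e_{i + (n/d) j}` in `ℚ^n`. -/
def cycVecQ (n d : ℕ) (i : ℕ) : Fin n → ℚ := ∑ j ∈ Finset.range d, stdVecQ n (i + (n / d) * j)

lemma sum_range_mul_eq {M : Type*} [AddCommMonoid M] (f : ℕ → M) (q : ℕ) :
    ∀ p, ∑ s ∈ Finset.range (q * p), f s
      = ∑ j' ∈ Finset.range p, ∑ j ∈ Finset.range q, f (j + q * j')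
  | 0 => by simp
  | (p + 1) => by
    rw [Nat.mul_succ, Finset.sum_range_add, sum_range_mul_eq f q p, Finset.sum_range_succ]
    congr 1
    apply Finset.sum_congr rfl
    intro j _
    rw [Nat.add_comm]

lemma eval_coord (n m P : ℕ) (a : ℕ → ℕ → ℚ) (i0 t : ℕ) (hi0 : i0 < m) (ht : t < P)
    (x : Fin n) (hx : (x : ℕ) = i0 + m * t) :
    (∑ i ∈ Finset.range m, ∑ s ∈ Finset.range P, a i s • stdVecQ n (i + m * s)) x
      = a i0 t := by
  have hm0 : 0 < m := lt_of_le_of_lt (Nat.zero_le _) hi0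
  simp only [Finset.sum_apply, Pi.smul_apply, stdVecQ, smul_eq_mul, hx]
  rw [Finset.sum_eq_single i0]
  · rw [Finset.sum_eq_single t]
    · simp
    · intro s _ hst
      rw [if_neg, mul_zero]
      intro hEq
      exact hst (Nat.eq_of_mul_eq_mul_left hm0 (Nat.add_left_cancel hEq)).symm
    · intro hni
      exact absurd (Finset.mem_range.mpr ht) hni
  · intro i hi hne
    apply Finset.sum_eq_zero
    intro s _
    rw [if_neg, mul_zero]
    intro hEq
    have h2 : (i0 + m * t) % m = (i + m * s) % m := by rw [hEq]
    rw [Nat.add_mul_mod_self_left, Nat.add_mul_mod_self_left,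
      Nat.mod_eq_of_lt hi0, Nat.mod_eq_of_lt (Finset.mem_range.mp hi)] at h2
    exact hne h2.symm
  · intro hni
    exact absurd (Finset.mem_range.mpr hi0) hni

/-- If a ℚ-linear relation
`∑_{i<n_{pq}} ∑_{j<q} c_{i,j} v^(p)_{i+n_{pq}j} = ∑_{i<n_{pq}} ∑_{j<p} d_{i,j} v^(q)_{i+n_{pq}j}`
holds with `p, q` coprime and `pq ∣ n`, then for each `i` all of
`c_{i,0},…,c_{i,q-1}, d_{i,0},…,d_{i,p-1}` are equal. -/
theorem stmt4 (n p q : ℕ) (hp : 0 < p) (hq : 0 < q) (hco : Nat.Coprime p q)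
    (hpq : p * q ∣ n) (c d : ℕ → ℕ → ℚ)
    (h : ∑ i ∈ Finset.range (n / (p * q)), ∑ j ∈ Finset.range q,
            c i j • cycVecQ n p (i + (n / (p * q)) * j)
        = ∑ i ∈ Finset.range (n / (p * q)), ∑ j ∈ Finset.range p,
            d i j • cycVecQ n q (i + (n / (p * q)) * j)) :
    ∀ i < n / (p * q), (∀ j < q, c i j = c i 0) ∧ (∀ j < p, d i j = c i 0) := by
  set m := n / (p * q) with hm
  have hn : m * (p * q) = n := Nat.div_mul_cancel hpq
  have hnp : n / p = m * q := by
    rw [← hn, show m * (p * q) = m * q * p by ring, Nat.mul_div_cancel _ hp]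
  have hnq : n / q = m * p := by
    rw [← hn, show m * (p * q) = m * p * q by ring, Nat.mul_div_cancel _ hq]
  have hLHS : (∑ i ∈ Finset.range m, ∑ j ∈ Finset.range q, c i j • cycVecQ n p (i + m * j))
      = ∑ i ∈ Finset.range m, ∑ s ∈ Finset.range (q * p),
          c i (s % q) • stdVecQ n (i + m * s) := by
    apply Finset.sum_congr rfl
    intro i _
    rw [sum_range_mul_eq, Finset.sum_comm]
    apply Finset.sum_congr rfl
    intro j hj
    unfold cycVecQ
    rw [Finset.smul_sum]
    apply Finset.sum_congr rfl
    intro j' _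
    rw [Nat.add_mul_mod_self_left, Nat.mod_eq_of_lt (Finset.mem_range.mp hj), hnp,
      show i + m * j + m * q * j' = i + m * (j + q * j') by ring]
  have hRHS : (∑ i ∈ Finset.range m, ∑ j ∈ Finset.range p, d i j • cycVecQ n q (i + m * j))
      = ∑ i ∈ Finset.range m, ∑ s ∈ Finset.range (p * q),
          d i (s % p) • stdVecQ n (i + m * s) := by
    apply Finset.sum_congr rfl
    intro i _
    rw [sum_range_mul_eq, Finset.sum_comm]
    apply Finset.sum_congr rfl
    intro j hj
    unfold cycVecQ
    rw [Finset.smul_sum]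
    apply Finset.sum_congr rfl
    intro j' _
    rw [Nat.add_mul_mod_self_left, Nat.mod_eq_of_lt (Finset.mem_range.mp hj), hnq,
      show i + m * j + m * p * j' = i + m * (j + p * j') by ring]
  rw [hLHS, hRHS] at h
  intro i0 hi0
  have key : ∀ t < p * q, c i0 (t % q) = d i0 (t % p) := by
    intro t ht
    have hxlt : i0 + m * t < n := by
      calc i0 + m * t < m + m * t := by omega
        _ = m * (t + 1) := by ring
        _ ≤ m * (p * q) := Nat.mul_le_mul_left m ht
        _ = n := hn
    have := congrFun h ⟨i0 + m * t, hxlt⟩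
    rw [eval_coord n m (q * p) (fun i s => c i (s % q)) i0 t hi0 (by rw [mul_comm q p]; exact ht) _ rfl,
      eval_coord n m (p * q) (fun i s => d i (s % p)) i0 t hi0 ht _ rfl] at this
    exact this
  have hpq0 : 0 < p * q := Nat.mul_pos hp hq
  have h00 : c i0 0 = d i0 0 := by simpa using key 0 hpq0
  constructor
  · intro j hj
    have htlt := Nat.chineseRemainder_lt_mul hco 0 j hp.ne' hq.ne'
    have ht1 := (Nat.chineseRemainder hco 0 j).2.1
    have ht2 := (Nat.chineseRemainder hco 0 j).2.2
    rw [Nat.ModEq, Nat.zero_mod] at ht1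
    rw [Nat.ModEq, Nat.mod_eq_of_lt hj] at ht2
    have := key _ htlt
    rw [ht1, ht2] at this
    rw [this, ← h00]
  · intro j hj
    have htlt := Nat.chineseRemainder_lt_mul hco j 0 hp.ne' hq.ne'
    have ht1 := (Nat.chineseRemainder hco j 0).2.1
    have ht2 := (Nat.chineseRemainder hco j 0).2.2
    rw [Nat.ModEq, Nat.mod_eq_of_lt hj] at ht1
    rw [Nat.ModEq, Nat.zero_mod] at ht2
    have := key _ htlt
    rw [ht1, ht2] at this
    exact this.symm
end

section
/- Let p and q be coprime positive integers with pq | n, and let σ : ℤ^{n_p} × ℤ^{n_q} → ℤ^n be the ℤ-module homomorphism σ(c,d) = Σ_{i=0}^{n_p-1} c_i v^(p)_i + Σ_{i=0}^{n_q-1} d_i v^(q)_i. Then Ker(σ) consists exactly of the pairs (c,d) where c is the q-fold repetition (m,m,...,m) of some m ∈ ℤ^{n_{pq}} and d is the negative of the p-fold repetition -(m,m,...,m). -/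
/-- The `k`-th standard basis vector of `ℤ^n`. -/
def stdVec (n : ℕ) (k : ℕ) : Fin n → ℤ := fun m => if (m : ℕ) = k then 1 else 0

/-- `v^(d)_i = ∑_{j=0}^{d-1} e_{i + (n/d) j}` in `ℤ^n`. -/
def cycVec (n d : ℕ) (i : ℕ) : Fin n → ℤ := ∑ j ∈ Finset.range d, stdVec n (i + (n / d) * j)

lemma cycVec_apply (n p : ℕ) (hpn : n / p * p = n) (i : ℕ) (hi : i < n / p)
    (k : Fin n) : cycVec n p i k = if (k : ℕ) % (n / p) = i then 1 else 0 := by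
  have hnp : 0 < n / p := lt_of_le_of_lt (Nat.zero_le i) hi
  have hk : (k : ℕ) < n := k.2
  simp only [cycVec, stdVec, Finset.sum_apply]
  by_cases h : (k : ℕ) % (n / p) = i
  · rw [if_pos h, Finset.sum_eq_single ((k : ℕ) / (n / p))]
    · rw [if_pos]; rw [← h, Nat.mod_add_div]
    · intro j _ hj
      rw [if_neg]
      intro he
      have hje : (k : ℕ) / (n / p) = j := by
        rw [he, Nat.add_mul_div_left _ _ hnp, Nat.div_eq_of_lt hi, zero_add]
      exact hj hje.symm
    · intro hmem
      exact absurd (Finset.mem_range.2 ((Nat.div_lt_iff_lt_mul hnp).2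
        (by rw [mul_comm, hpn]; exact hk))) hmem
  · rw [if_neg h]
    apply Finset.sum_eq_zero
    intro j _
    rw [if_neg]
    intro he
    exact h (by rw [he, Nat.add_mul_mod_self_left, Nat.mod_eq_of_lt hi])

lemma sum_cycVec_apply (n p : ℕ) (hpn : n / p * p = n) (hnp : 0 < n / p)
    (c : Fin (n / p) → ℤ) (k : Fin n) :
    (∑ i : Fin (n / p), c i • cycVec n p (i : ℕ)) k
      = c ⟨(k : ℕ) % (n / p), Nat.mod_lt _ hnp⟩ := by
  rw [Finset.sum_apply]
  have hstep : ∀ i : Fin (n / p), (c i • cycVec n p (i : ℕ)) k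
      = if i = ⟨(k : ℕ) % (n / p), Nat.mod_lt _ hnp⟩ then c i else 0 := by
    intro i
    rw [Pi.smul_apply, smul_eq_mul, cycVec_apply n p hpn (i : ℕ) i.2 k]
    by_cases h : i = (⟨(k : ℕ) % (n / p), Nat.mod_lt _ hnp⟩ : Fin (n / p))
    · rw [if_pos (show (k : ℕ) % (n / p) = (i : ℕ) by rw [h]), mul_one, if_pos h]
    · rw [if_neg (fun he => h (Fin.ext he.symm)), mul_zero, if_neg h]
  rw [Finset.sum_congr rfl (fun i _ => hstep i), Finset.sum_ite_eq' _ _ _,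
    if_pos (Finset.mem_univ _)]

/-- For `p, q` coprime with `pq ∣ n`, the kernel of
`σ(c, d) = ∑ c_i v^(p)_i + ∑ d_i v^(q)_i` consists exactly of the pairs where `c` is the
`q`-fold repetition of some `m ∈ ℤ^{n_{pq}}` and `d` is minus its `p`-fold repetition. -/
theorem stmt5 (n p q : ℕ) (hp : 0 < p) (hq : 0 < q) (hco : Nat.Coprime p q)
    (hpq : p * q ∣ n) (c : Fin (n / p) → ℤ) (d : Fin (n / q) → ℤ) :
    (∑ i : Fin (n / p), c i • cycVec n p (i : ℕ)
      + ∑ i : Fin (n / q), d i • cycVec n q (i : ℕ) = 0)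
    ↔ ∃ m : ℕ → ℤ,
        (∀ i : Fin (n / p), c i = m ((i : ℕ) % (n / (p * q)))) ∧
        (∀ i : Fin (n / q), d i = - m ((i : ℕ) % (n / (p * q)))) := by
  rcases Nat.eq_zero_or_pos n with hn | hn
  · subst hn
    constructor
    · intro _
      exact ⟨fun _ => 0, fun i => absurd i.2 (by simp), fun i => absurd i.2 (by simp)⟩
    · intro _
      have e1 : (∑ i : Fin (0 / p), c i • cycVec 0 p (i : ℕ)) = 0 :=
        Finset.sum_eq_zero (fun i _ => absurd i.2 (by simp))
      have e2 : (∑ i : Fin (0 / q), d i • cycVec 0 q (i : ℕ)) = 0 :=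
        Finset.sum_eq_zero (fun i _ => absurd i.2 (by simp))
      rw [e1, e2, add_zero]
  · have hpn : p ∣ n := (dvd_mul_right p q).trans hpq
    have hqn : q ∣ n := (dvd_mul_left q p).trans hpq
    have hpn' : n / p * p = n := Nat.div_mul_cancel hpn
    have hqn' : n / q * q = n := Nat.div_mul_cancel hqn
    set r := n / (p * q) with hr
    have hrn : r * (p * q) = n := Nat.div_mul_cancel hpq
    have hnp_eq : n / p = r * q := by
      have h : n = (r * q) * p := by rw [← hrn]; ring
      rw [h, Nat.mul_div_cancel _ hp]
    have hnq_eq : n / q = r * p := by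
      have h : n = (r * p) * q := by rw [← hrn]; ring
      rw [h, Nat.mul_div_cancel _ hq]
    have hr0 : 0 < r := by
      rcases Nat.eq_zero_or_pos r with h | h
      · rw [h, zero_mul] at hrn; omega
      · exact h
    have hnp0 : 0 < n / p := by rw [hnp_eq]; positivity
    have hnq0 : 0 < n / q := by rw [hnq_eq]; positivity
    have hrnp : r ≤ n / p := by
      rw [hnp_eq]; exact Nat.le_mul_of_pos_right _ hq
    have hrnq : r ≤ n / q := by
      rw [hnq_eq]; exact Nat.le_mul_of_pos_right _ hp
    have hgcd : Nat.gcd (n / p) (n / q) = r := by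
      rw [hnp_eq, hnq_eq, Nat.gcd_mul_left, Nat.Coprime.gcd_eq_one hco.symm, mul_one]
    have hLHS : (∑ i : Fin (n / p), c i • cycVec n p (i : ℕ)
        + ∑ i : Fin (n / q), d i • cycVec n q (i : ℕ) = 0)
        ↔ ∀ k : Fin n, c ⟨(k : ℕ) % (n / p), Nat.mod_lt _ hnp0⟩
            + d ⟨(k : ℕ) % (n / q), Nat.mod_lt _ hnq0⟩ = 0 := by
      rw [funext_iff]
      apply forall_congr'
      intro k
      rw [Pi.add_apply, Pi.zero_apply, sum_cycVec_apply n p hpn' hnp0 c k,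
        sum_cycVec_apply n q hqn' hnq0 d k]
    rw [hLHS]
    constructor
    · intro h
      have key : ∀ (a b : ℕ) (ha : a < n / p) (hb : b < n / q), a % r = b % r →
          c ⟨a, ha⟩ + d ⟨b, hb⟩ = 0 := by
        intro a b ha hb hab
        obtain ⟨k, hk1, hk2⟩ := Nat.chineseRemainder'
          (show a ≡ b [MOD Nat.gcd (n / p) (n / q)] by rw [hgcd]; exact hab)
        have hk1' : (k % n) % (n / p) = a := by
          calc k % n % (n / p) = k % (n / p) := Nat.mod_mod_of_dvd _ ⟨p, hpn'.symm⟩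
            _ = a % (n / p) := hk1
            _ = a := Nat.mod_eq_of_lt ha
        have hk2' : (k % n) % (n / q) = b := by
          calc k % n % (n / q) = k % (n / q) := Nat.mod_mod_of_dvd _ ⟨q, hqn'.symm⟩
            _ = b % (n / q) := hk2
            _ = b := Nat.mod_eq_of_lt hb
        have hthis := h ⟨k % n, Nat.mod_lt _ hn⟩
        have e1 : (⟨((⟨k % n, Nat.mod_lt _ hn⟩ : Fin n) : ℕ) % (n / p),
            Nat.mod_lt _ hnp0⟩ : Fin (n / p)) = ⟨a, ha⟩ := Fin.ext hk1'
        have e2 : (⟨((⟨k % n, Nat.mod_lt _ hn⟩ : Fin n) : ℕ) % (n / q),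
            Nat.mod_lt _ hnq0⟩ : Fin (n / q)) = ⟨b, hb⟩ := Fin.ext hk2'
        rw [e1, e2] at hthis
        exact hthis
      refine ⟨fun x => if hx : x < n / p then c ⟨x, hx⟩ else 0, ?_, ?_⟩
      · intro i
        have hlt : (i : ℕ) % r < n / p := lt_of_lt_of_le (Nat.mod_lt _ hr0) hrnp
        dsimp only
        rw [dif_pos hlt]
        have h1 := key (i : ℕ) ((i : ℕ) % r) i.2
          (lt_of_lt_of_le (Nat.mod_lt _ hr0) hrnq)
          (Nat.mod_mod_of_dvd _ dvd_rfl).symm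
        have h2 := key ((i : ℕ) % r) ((i : ℕ) % r) hlt
          (lt_of_lt_of_le (Nat.mod_lt _ hr0) hrnq) rfl
        have hi : (⟨(i : ℕ), i.2⟩ : Fin (n / p)) = i := rfl
        rw [hi] at h1
        linarith
      · intro j
        have hlt : (j : ℕ) % r < n / p := lt_of_lt_of_le (Nat.mod_lt _ hr0) hrnp
        dsimp only
        rw [dif_pos hlt]
        have h1 := key ((j : ℕ) % r) (j : ℕ) hlt j.2
          (Nat.mod_mod_of_dvd _ dvd_rfl)
        have hj : (⟨(j : ℕ), j.2⟩ : Fin (n / q)) = j := rfl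
        rw [hj] at h1
        linarith
    · rintro ⟨m, hm1, hm2⟩ k
      rw [hm1, hm2]
      show m ((k : ℕ) % (n / p) % r) + -m ((k : ℕ) % (n / q) % r) = 0
      rw [Nat.mod_mod_of_dvd _ ⟨q, hnp_eq⟩, Nat.mod_mod_of_dvd _ ⟨p, hnq_eq⟩]
      exact add_neg_cancel _
end

section
/- If n has at least three distinct prime factors, then there exists a vector α ∈ V_n ∩ (ℤ_{≥0})^n which is not a ℤ_{≥0}-linear combination of the vectors v^(p)_i for p ranging over prime factors of n and 0 ≤ i ≤ n/p - 1. Explicitly, for distinct prime factors p < q < r of n, the vector α' = Σ_{j=2}^{p} v^(q)_{n_p j mod n_q} + v^(r)_{(n_p + n_q) mod n_r} - v^(p)_{n_q mod n_p} is such a vector. -/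
open Finset

section CycVec

variable {n d i : ℕ}

lemma cycVec_nonneg (m : Fin n) : 0 ≤ cycVec n d i m := by
  simp only [cycVec, Finset.sum_apply, stdVec]
  exact sum_nonneg fun _ _ => by split_ifs <;> norm_num

lemma cycVec_apply_of_lt (hd : d ∣ n) (hi : i < n / d) (m : Fin n) :
    cycVec n d i m = if ((n / d : ℕ) : ℤ) ∣ (m : ℤ) - i then 1 else 0 := by
  have hnd : 0 < n / d := hi.pos
  have hdvd : ((n / d : ℕ) : ℤ) ∣ (m : ℤ) - i ↔ (m : ℕ) % (n / d) = i := by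
    rw [dvd_sub_comm, ← Nat.modEq_iff_dvd, Nat.ModEq, Nat.mod_eq_of_lt hi, eq_comm]
  simp only [cycVec, Finset.sum_apply, stdVec, hdvd]
  split_ifs with h
  · have hj : ∀ j, (m : ℕ) = i + n / d * j ↔ j = (m : ℕ) / (n / d) := fun j => by
      constructor
      · intro he
        rw [he, Nat.add_mul_div_left _ _ hnd, Nat.div_eq_of_lt hi, zero_add]
      · rintro rfl
        rw [← h, Nat.mod_add_div]
    simp only [hj, sum_ite_eq', mem_range]
    rw [if_pos (Nat.div_lt_of_lt_mul (by rw [Nat.div_mul_cancel hd]; exact m.isLt))]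
  · refine sum_eq_zero fun j _ => if_neg fun he => h ?_
    rw [he, Nat.add_mul_mod_self_left, Nat.mod_eq_of_lt hi]

lemma cycVec_mod_apply (hd : d ∣ n) (hn : 0 < n) (x : ℕ) (m : Fin n) :
    cycVec n d (x % (n / d)) m = if ((n / d : ℕ) : ℤ) ∣ (m : ℤ) - x then 1 else 0 := by
  have hnd : 0 < n / d := Nat.div_pos (Nat.le_of_dvd hn hd) (Nat.pos_of_dvd_of_pos hd hn)
  rw [cycVec_apply_of_lt hd (Nat.mod_lt x hnd)]
  refine if_congr ?_ rfl rfl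
  rw [← Int.modEq_iff_dvd, ← Int.modEq_iff_dvd, Int.natCast_mod]
  exact ⟨(Int.mod_modEq _ _).symm.trans, (Int.mod_modEq _ _).trans⟩

end CycVec

/-- `V_n` is the kernel of `rootEval n ζ_n`. -/
def rootEval (n : ℕ) (ζ : ℂ) : (Fin n → ℤ) →+ ℂ where
  toFun v := ∑ m : Fin n, (v m : ℂ) * ζ ^ (m : ℕ)
  map_zero' := by simp
  map_add' v w := by simp [add_mul, sum_add_distrib]

lemma rootEval_stdVec {n k : ℕ} (ζ : ℂ) (hk : k < n) : rootEval n ζ (stdVec n k) = ζ ^ k := by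
  simp only [rootEval, AddMonoidHom.coe_mk, ZeroHom.coe_mk, stdVec]
  rw [Fintype.sum_eq_single ⟨k, hk⟩ fun m hm => by simp [Fin.ext_iff.not.mp hm]]
  simp

lemma rootEval_cycVec {n d i : ℕ} {ζ : ℂ} (hζ : IsPrimitiveRoot ζ n) (hn : 0 < n) (hd : d ∣ n)
    (hd1 : 1 < d) (hi : i < n / d) : rootEval n ζ (cycVec n d i) = 0 := by
  have hlt : ∀ j ∈ range d, i + n / d * j < n := fun j hj => by
    calc i + n / d * j < n / d * (j + 1) := by linarith
      _ ≤ n / d * d := Nat.mul_le_mul_left _ (mem_range.mp hj)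
      _ = n := Nat.div_mul_cancel hd
  have hprim : IsPrimitiveRoot (ζ ^ (n / d)) d := by
    simpa [Nat.div_div_self hd hn.ne'] using hζ.pow_of_dvd hi.pos.ne' (Nat.div_dvd_of_dvd hd)
  rw [cycVec, map_sum, sum_congr rfl fun j hj => rootEval_stdVec ζ (hlt j hj)]
  simp only [pow_add, pow_mul, ← mul_sum, hprim.geom_sum_eq_zero hd1, mul_zero]

/-- The vector `α'`. -/
def alphaVec (n p q r : ℕ) : Fin n → ℤ :=
  ∑ j ∈ Icc 2 p, cycVec n q ((n / p * j) % (n / q)) + cycVec n r ((n / p + n / q) % (n / r))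
    - cycVec n p ((n / q) % (n / p))

lemma rootEval_alphaVec {n p q r : ℕ} {ζ : ℂ} (hζ : IsPrimitiveRoot ζ n) (hn : 0 < n) (hp : p.Prime)
    (hq : q.Prime) (hr : r.Prime) (hpn : p ∣ n) (hqn : q ∣ n) (hrn : r ∣ n) :
    rootEval n ζ (alphaVec n p q r) = 0 := by
  have hroot : ∀ {d : ℕ} (x : ℕ), d.Prime → d ∣ n → rootEval n ζ (cycVec n d (x % (n / d))) = 0 :=
    fun x hd hdn => rootEval_cycVec hζ hn hdn hd.one_lt
      (Nat.mod_lt x (Nat.div_pos (Nat.le_of_dvd hn hdn) hd.pos))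
  simp only [alphaVec, map_sub, map_add, map_sum, hroot _ hp hpn, hroot _ hq hqn, hroot _ hr hrn,
    sum_const_zero, add_zero, sub_zero]

lemma Nat.Prime.natCast_not_dvd {s t : ℕ} (hs : s.Prime) (ht : t.Prime) (hst : s ≠ t) :
    ¬ (s : ℤ) ∣ t := fun h =>
  hst ((Nat.prime_dvd_prime_iff_eq hs ht).mp (Int.natCast_dvd_natCast.mp h))

lemma Nat.Prime.natCast_not_dvd_mul {s t u : ℕ} (hs : s.Prime) (ht : t.Prime) (hu : u.Prime)
    (hst : s ≠ t) (hsu : s ≠ u) : ¬ (s : ℤ) ∣ t * u := fun h =>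
  (Int.Prime.dvd_mul' hs h).elim (hs.natCast_not_dvd ht hst) (hs.natCast_not_dvd hu hsu)

lemma Nat.Prime.natCast_dvd_of_dvd_mul {s t : ℕ} {u : ℤ} (hs : s.Prime) (ht : t.Prime) (hst : s ≠ t)
    (h : (s : ℤ) ∣ t * u) : (s : ℤ) ∣ u :=
  (Int.Prime.dvd_mul' hs h).resolve_left (hs.natCast_not_dvd ht hst)

lemma not_natCast_dvd_sub_one {p j : ℕ} (hj : 2 ≤ j) (hjp : j ≤ p) : ¬ (p : ℤ) ∣ j - 1 := by
  intro h
  have := Int.le_of_dvd (by omega) h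
  omega

lemma mul_mul_dvd_of_prime_dvd {n p q r : ℕ} (hp : p.Prime) (hq : q.Prime) (hr : r.Prime)
    (hpq : p ≠ q) (hpr : p ≠ r) (hqr : q ≠ r) (hpn : p ∣ n) (hqn : q ∣ n) (hrn : r ∣ n) :
    p * q * r ∣ n :=
  Nat.Coprime.mul_dvd_of_dvd_of_dvd
    (Nat.Coprime.mul_left ((Nat.coprime_primes hp hr).mpr hpr) ((Nat.coprime_primes hq hr).mpr hqr))
    (Nat.Coprime.mul_dvd_of_dvd_of_dvd ((Nat.coprime_primes hp hq).mpr hpq) hpn hqn) hrn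

lemma dvd_sub_iff_of_dvd_sub {e N y y' : ℤ} (z : ℤ) (he : e ∣ N) (h : N ∣ y - y') :
    e ∣ y - z ↔ e ∣ y' - z := by
  rw [show y - z = (y - y') + (y' - z) by ring]
  exact dvd_add_right (he.trans h)

/-! With `n = pqrG`, so that `n_p = qrG`, `n_q = prG`, `n_r = pqG`, the predicates `OnPCoset`,
`OnQCoset j` and `OnRCoset` describe the supports of `v^(p)_{n_q}`, `v^(q)_{n_p j}` and
`v^(r)_{n_p + n_q}`, lifted to `n`-periodic subsets of `ℤ`. -/

section Support

variable {p q r G : ℕ}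

abbrev OnPCoset (p q r G : ℕ) (y : ℤ) : Prop := (q * r * G : ℤ) ∣ y - p * r * G

abbrev OnQCoset (p q r G j : ℕ) (y : ℤ) : Prop := (p * r * G : ℤ) ∣ y - q * r * G * j

abbrev OnRCoset (p q r G : ℕ) (y : ℤ) : Prop := (p * q * G : ℤ) ∣ y - (q * r * G + p * r * G)

def coverCount (p q r G : ℕ) (y : ℤ) : ℤ :=
  (∑ j ∈ Icc 2 p, if OnQCoset p q r G j y then 1 else 0) + if OnRCoset p q r G y then 1 else 0

def alphaFun (p q r G : ℕ) (y : ℤ) : ℤ :=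
  coverCount p q r G y - if OnPCoset p q r G y then 1 else 0

def InSupport (p q r G : ℕ) (y : ℤ) : Prop :=
  ((∃ j ∈ Icc 2 p, OnQCoset p q r G j y) ∨ OnRCoset p q r G y) ∧ ¬ OnPCoset p q r G y

lemma alphaFun_congr {y y' : ℤ} (h : (p * q * r * G : ℤ) ∣ y - y') :
    alphaFun p q r G y = alphaFun p q r G y' := by
  have hp : (q * r * G : ℤ) ∣ p * q * r * G := ⟨p, by ring⟩
  have hq : (p * r * G : ℤ) ∣ p * q * r * G := ⟨q, by ring⟩
  have hr : (p * q * G : ℤ) ∣ p * q * r * G := ⟨r, by ring⟩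
  simp only [alphaFun, coverCount, OnPCoset, OnQCoset, OnRCoset, dvd_sub_iff_of_dvd_sub _ hp h,
    dvd_sub_iff_of_dvd_sub _ hq h, dvd_sub_iff_of_dvd_sub _ hr h]

lemma onQCoset_or_onRCoset_of_onPCoset (hp : 2 ≤ p) {y : ℤ} (h : OnPCoset p q r G y) :
    (∃ j ∈ Icc 2 p, OnQCoset p q r G j y) ∨ OnRCoset p q r G y := by
  -- `y = n_q + n_p t`, and `t mod p` decides which coset covers `y`: `0 ↦ Q_p`, `1 ↦ R`, `k ↦ Q_k`
  obtain ⟨t, ht⟩ := h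
  have hp0 : (0 : ℤ) < p := by omega
  obtain ⟨k, hk⟩ : ∃ k : ℕ, (k : ℤ) = t % p := ⟨_, Int.toNat_of_nonneg (Int.emod_nonneg t hp0.ne')⟩
  have hkp : k < p := by have := Int.emod_lt_of_pos t hp0; omega
  have htk : t = p * (t / p) + k := by rw [hk, Int.mul_ediv_add_emod]
  rcases Nat.lt_or_ge k 2 with hk2 | hk2
  · interval_cases k
    · exact .inl ⟨p, mem_Icc.mpr ⟨hp, le_rfl⟩, 1 + q * (t / p) - q,
        by linear_combination ht + q * r * G * htk⟩
    · exact .inr ⟨r * (t / p), by linear_combination ht + q * r * G * htk⟩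
  · exact .inl ⟨k, mem_Icc.mpr ⟨hk2, hkp.le⟩, 1 + q * (t / p),
      by linear_combination ht + q * r * G * htk⟩

lemma eq_of_onQCoset (hp : p.Prime) (hq : q.Prime) (hpq : p ≠ q) (hr : r ≠ 0) (hG : G ≠ 0)
    {j j' : ℕ} (hj : j ∈ Icc 2 p) (hj' : j' ∈ Icc 2 p) {y : ℤ}
    (h : OnQCoset p q r G j y) (h' : OnQCoset p q r G j' y) : j = j' := by
  obtain ⟨t, ht⟩ := dvd_sub h' h
  have e : (q * (j - j') : ℤ) = p * t :=
    mul_right_cancel₀ (by simp [hr, hG] : (r * G : ℤ) ≠ 0) (by linear_combination ht)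
  have hdvd : (p : ℤ) ∣ j - j' := hp.natCast_dvd_of_dvd_mul hq hpq ⟨t, e⟩
  have := Int.eq_zero_of_abs_lt_dvd hdvd (by rw [mem_Icc] at hj hj'; rw [abs_lt]; omega)
  omega

lemma not_onQCoset_of_onPCoset_of_onRCoset (hp : p.Prime) (hq : q.Prime) (hr : r.Prime)
    (hpq : p ≠ q) (hpr : p ≠ r) (hG : G ≠ 0) {j : ℕ} (hj : j ∈ Icc 2 p) {y : ℤ}
    (hP : OnPCoset p q r G y) (hR : OnRCoset p q r G y) : ¬ OnQCoset p q r G j y := by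
  rintro ⟨v, hv⟩
  obtain ⟨t, ht⟩ := hP
  obtain ⟨u, hu⟩ := hR
  have e₁ : (r * (t - 1) : ℤ) = p * u :=
    mul_right_cancel₀ (by simp [hq.ne_zero, hG] : (q * G : ℤ) ≠ 0) (by linear_combination hu - ht)
  have e₂ : (q * (t - j) : ℤ) = p * (v - 1) :=
    mul_right_cancel₀ (by simp [hr.ne_zero, hG] : (r * G : ℤ) ≠ 0) (by linear_combination hv - ht)
  have h₁ := hp.natCast_dvd_of_dvd_mul hr hpr ⟨u, e₁⟩
  have h₂ := hp.natCast_dvd_of_dvd_mul hq hpq ⟨v - 1, e₂⟩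
  rw [mem_Icc] at hj
  exact not_natCast_dvd_sub_one hj.1 hj.2 (by simpa using dvd_sub h₁ h₂)

lemma coverCount_nonneg (y : ℤ) : 0 ≤ coverCount p q r G y := by
  unfold coverCount
  rw [sum_boole]
  split_ifs <;> positivity

lemma coverCount_pos_iff {y : ℤ} :
    0 < coverCount p q r G y ↔ (∃ j ∈ Icc 2 p, OnQCoset p q r G j y) ∨ OnRCoset p q r G y := by
  unfold coverCount
  rw [sum_boole]
  split_ifs with hR <;> simp [hR, card_pos, filter_nonempty_iff]

lemma coverCount_eq_one_of_onPCoset (hp : p.Prime) (hq : q.Prime) (hr : r.Prime)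
    (hpq : p ≠ q) (hpr : p ≠ r) (hG : G ≠ 0) {y : ℤ} (hP : OnPCoset p q r G y) :
    coverCount p q r G y = 1 := by
  unfold coverCount
  by_cases hR : OnRCoset p q r G y
  · rw [if_pos hR, sum_eq_zero fun j hj =>
      if_neg (not_onQCoset_of_onPCoset_of_onRCoset hp hq hr hpq hpr hG hj hP hR), zero_add]
  · obtain ⟨j, hj, hQ⟩ := (onQCoset_or_onRCoset_of_onPCoset hp.two_le hP).resolve_right hR
    rw [if_neg hR, add_zero, sum_eq_single_of_mem j hj fun j' hj' hne =>
      if_neg fun hQ' => hne (eq_of_onQCoset hp hq hpq hr.ne_zero hG hj' hj hQ' hQ), if_pos hQ]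

lemma alphaFun_nonneg (hp : 2 ≤ p) (y : ℤ) : 0 ≤ alphaFun p q r G y := by
  unfold alphaFun
  split_ifs with hP
  · have := coverCount_pos_iff.mpr (onQCoset_or_onRCoset_of_onPCoset hp hP)
    omega
  · simpa using coverCount_nonneg y

lemma alphaFun_pos_iff (hp : p.Prime) (hq : q.Prime) (hr : r.Prime) (hpq : p ≠ q) (hpr : p ≠ r)
    (hG : G ≠ 0) {y : ℤ} : 0 < alphaFun p q r G y ↔ InSupport p q r G y := by
  unfold alphaFun InSupport
  split_ifs with hP
  · simp [coverCount_eq_one_of_onPCoset hp hq hr hpq hpr hG hP, hP]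
  · simp [coverCount_pos_iff, hP]

lemma not_forall_inSupport_pCoset (hp : p.Prime) (hq : q.Prime) (hr : r.Prime) (hpq : p ≠ q)
    (hpr : p ≠ r) (hqr : q ≠ r) (hG : G ≠ 0) (x : ℤ) :
    ¬ ∀ k : ℤ, InSupport p q r G (x + q * r * G * k) := by
  intro H
  obtain ⟨k, j, hj, t, ht⟩ : ∃ k : ℤ, ∃ j ∈ Icc 2 p, OnQCoset p q r G j (x + q * r * G * k) := by
    rcases (H 0).1 with hQ | hR₀
    · exact ⟨0, hQ⟩
    rcases (H 1).1 with hQ | hR₁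
    · exact ⟨1, hQ⟩
    obtain ⟨u, hu⟩ := dvd_sub hR₁ hR₀
    exact absurd ⟨u, mul_right_cancel₀ (by simp [hq.ne_zero, hG] : (q * G : ℤ) ≠ 0)
      (by linear_combination hu)⟩ (hp.natCast_not_dvd hr hpr)
  -- `x + n_p (k + 1 - j)` lies in `n_p + ⟨n_q⟩`, which misses `Q`; if it is in `R`, then the
  -- point `x + n_p (k - j)` before it is in `C`.
  rcases (H (k + 1 - j)).1 with ⟨j', hj', v, hv⟩ | ⟨u, hu⟩
  · have e : (q * (j' - 1) : ℤ) = p * (t - v) :=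
      mul_right_cancel₀ (by simp [hr.ne_zero, hG] : (r * G : ℤ) ≠ 0) (by linear_combination ht - hv)
    rw [mem_Icc] at hj'
    exact not_natCast_dvd_sub_one hj'.1 hj'.2 (hp.natCast_dvd_of_dvd_mul hq hpq ⟨_, e⟩)
  · have e : (r * (t - 1) : ℤ) = q * u :=
      mul_right_cancel₀ (by simp [hp.ne_zero, hG] : (p * G : ℤ) ≠ 0) (by linear_combination hu - ht)
    obtain ⟨w, hw⟩ := hq.natCast_dvd_of_dvd_mul hr hqr ⟨u, e⟩
    exact (H (k - j)).2 ⟨p * w, by linear_combination ht + p * r * G * hw⟩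

lemma not_forall_inSupport_qCoset (hp : p.Prime) (hq : q.Prime) (hr : r.Prime) (hqr : q ≠ r)
    (hG : G ≠ 0) (x : ℤ) : ¬ ∀ k : ℤ, InSupport p q r G (x + p * r * G * k) := by
  intro H
  -- a coset of `⟨n_q⟩` meeting `Q` is some `n_p j + ⟨n_q⟩`, which contains `n_p j + n_q ∈ C`
  have hR : ∀ k : ℤ, OnRCoset p q r G (x + p * r * G * k) := fun k => by
    refine (H k).1.resolve_left ?_
    rintro ⟨j, -, t, ht⟩
    exact (H (k - t + 1)).2 ⟨j, by linear_combination ht⟩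
  obtain ⟨u, hu⟩ := dvd_sub (hR 1) (hR 0)
  exact hq.natCast_not_dvd hr hqr ⟨u, mul_right_cancel₀ (by simp [hp.ne_zero, hG] : (p * G : ℤ) ≠ 0)
    (by linear_combination hu)⟩

lemma not_forall_inSupport_rCoset (hp : p.Prime) (hq : q.Prime) (hr : r.Prime) (hpr : p ≠ r)
    (hqr : q ≠ r) (hG : G ≠ 0) (x : ℤ) : ¬ ∀ k : ℤ, InSupport p q r G (x + p * q * G * k) := by
  intro H
  -- a coset of `⟨n_r⟩` meeting `R` is `R`, which contains `n_p + n_q ∈ C`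
  have hQ : ∀ k : ℤ, ∃ j ∈ Icc 2 p, OnQCoset p q r G j (x + p * q * G * k) := fun k => by
    refine (H k).1.resolve_right ?_
    rintro ⟨t, ht⟩
    exact (H (k - t)).2 ⟨1, by linear_combination ht⟩
  obtain ⟨j, -, hj⟩ := hQ 0
  obtain ⟨j', -, hj'⟩ := hQ 1
  obtain ⟨t, ht⟩ := dvd_sub hj' hj
  exact hr.natCast_not_dvd_mul hp hq hpr.symm hqr.symm ⟨p * t - q * (j - j'),
    mul_right_cancel₀ (by simp [hG] : (G : ℤ) ≠ 0) (by linear_combination ht)⟩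

lemma natCast_dvd_of_inSupport {y : ℤ} (h : InSupport p q r G y) : (G : ℤ) ∣ y := by
  rcases h.1 with ⟨j, -, t, ht⟩ | ⟨t, ht⟩
  · exact ⟨p * r * t + q * r * j, by linear_combination ht⟩
  · exact ⟨p * q * t + q * r + p * r, by linear_combination ht⟩

lemma not_forall_inSupport_of_not_dvd {e : ℤ} (he : ¬ (G : ℤ) ∣ e) (x : ℤ) :
    ¬ ∀ k : ℤ, InSupport p q r G (x + e * k) := fun H =>
  he (by simpa using dvd_sub (natCast_dvd_of_inSupport (H 1)) (natCast_dvd_of_inSupport (H 0)))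

lemma not_forall_inSupport (hp : p.Prime) (hq : q.Prime) (hr : r.Prime) (hpq : p ≠ q)
    (hpr : p ≠ r) (hqr : q ≠ r) (hG : G ≠ 0) {s : ℕ} (hs : s.Prime) (hsn : s ∣ p * q * r * G)
    (x : ℤ) : ¬ ∀ k : ℤ, InSupport p q r G (x + (p * q * r * G / s : ℕ) * k) := by
  rcases eq_or_ne s p with hsp | hsp
  · rw [hsp, Nat.div_eq_of_eq_mul_left hp.pos (by ring : p * q * r * G = q * r * G * p)]
    exact_mod_cast not_forall_inSupport_pCoset hp hq hr hpq hpr hqr hG x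
  rcases eq_or_ne s q with hsq | hsq
  · rw [hsq, Nat.div_eq_of_eq_mul_left hq.pos (by ring : p * q * r * G = p * r * G * q)]
    exact_mod_cast not_forall_inSupport_qCoset hp hq hr hqr hG x
  rcases eq_or_ne s r with hsr | hsr
  · rw [hsr, Nat.div_eq_of_eq_mul_left hr.pos (by ring : p * q * r * G = p * q * G * r)]
    exact_mod_cast not_forall_inSupport_rCoset hp hq hr hpr hqr hG x
  refine not_forall_inSupport_of_not_dvd (fun hdvd => ?_) x
  have hGs : G * s ∣ G * (p * q * r) := by
    rw [show G * (p * q * r) = p * q * r * G / s * s by rw [Nat.div_mul_cancel hsn]; ring]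
    exact Nat.mul_dvd_mul_right (Int.natCast_dvd_natCast.mp hdvd) s
  rcases (hs.dvd_mul.mp (Nat.dvd_of_mul_dvd_mul_left (Nat.pos_of_ne_zero hG) hGs)) with h | h
  · rcases hs.dvd_mul.mp h with h | h
    · exact hsp ((Nat.prime_dvd_prime_iff_eq hs hp).mp h)
    · exact hsq ((Nat.prime_dvd_prime_iff_eq hs hq).mp h)
  · exact hsr ((Nat.prime_dvd_prime_iff_eq hs hr).mp h)

lemma inSupport_two_mul (hp : p.Prime) (hq : q.Prime) (hpq : p ≠ q) (hr : r ≠ 0) (hG : G ≠ 0) :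
    InSupport p q r G (2 * (q * r * G)) := by
  refine ⟨.inl ⟨2, mem_Icc.mpr ⟨le_rfl, hp.two_le⟩, 0, by ring⟩, fun ⟨t, ht⟩ => ?_⟩
  exact hq.natCast_not_dvd hp hpq.symm
    ⟨2 - t, mul_right_cancel₀ (by simp [hr, hG] : (r * G : ℤ) ≠ 0) (by linear_combination -ht)⟩

end Support

lemma prime_mul_mul_mul_pos {p q r G : ℕ} (hp : p.Prime) (hq : q.Prime) (hr : r.Prime)
    (hG : G ≠ 0) : 0 < p * q * r * G :=
  Nat.pos_of_ne_zero (by simp [hp.ne_zero, hq.ne_zero, hr.ne_zero, hG])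

lemma alphaVec_apply {p q r G : ℕ} (hp : p.Prime) (hq : q.Prime) (hr : r.Prime) (hG : G ≠ 0)
    (m : Fin (p * q * r * G)) : alphaVec (p * q * r * G) p q r m = alphaFun p q r G m := by
  have hn := prime_mul_mul_mul_pos hp hq hr hG
  have hpn : p ∣ p * q * r * G := ⟨q * r * G, by ring⟩
  have hqn : q ∣ p * q * r * G := ⟨p * r * G, by ring⟩
  have hrn : r ∣ p * q * r * G := ⟨p * q * G, by ring⟩
  simp only [alphaVec, Pi.add_apply, Pi.sub_apply, Finset.sum_apply, cycVec_mod_apply hpn hn,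
    cycVec_mod_apply hqn hn, cycVec_mod_apply hrn hn]
  simp only [Nat.div_eq_of_eq_mul_left hp.pos (by ring : p * q * r * G = q * r * G * p),
    Nat.div_eq_of_eq_mul_left hq.pos (by ring : p * q * r * G = p * r * G * q),
    Nat.div_eq_of_eq_mul_left hr.pos (by ring : p * q * r * G = p * q * G * r)]
  push_cast
  rfl

lemma exists_fin_dvd_sub {n : ℕ} (hn : 0 < n) (y : ℤ) : ∃ m : Fin n, (n : ℤ) ∣ y - m := by
  have : NeZero n := ⟨hn.ne'⟩
  refine ⟨⟨(y : ZMod n).val, ZMod.val_lt _⟩, ?_⟩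
  rw [Fin.val_mk, ZMod.val_intCast]
  exact (Int.mod_modEq y n).dvd

lemma exists_forall_pos_of_eq_sum_cycVec {n : ℕ} {α : Fin n → ℤ} {c : ℕ → ℕ → ℕ}
    (hc : α = ∑ s ∈ n.primeFactors, ∑ i ∈ range (n / s), (c s i : ℤ) • cycVec n s i) (hα : α ≠ 0) :
    ∃ s ∈ n.primeFactors, ∃ i : ℕ, ∀ m : Fin n, ((n / s : ℕ) : ℤ) ∣ (m : ℤ) - i → 0 < α m := by
  obtain ⟨s, hs, hs0⟩ := exists_ne_zero_of_sum_ne_zero (hc ▸ hα)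
  obtain ⟨i, hi, hi0⟩ := exists_ne_zero_of_sum_ne_zero hs0
  have hci : 0 < c s i := Nat.pos_of_ne_zero fun h => hi0 (by simp [h])
  refine ⟨s, hs, i, fun m hm => ?_⟩
  have hterm : ∀ s' i', 0 ≤ (c s' i' : ℤ) * cycVec n s' i' m := fun s' i' =>
    mul_nonneg (Int.natCast_nonneg _) (cycVec_nonneg m)
  calc 0 < (c s i : ℤ) * cycVec n s i m := by
        rw [cycVec_apply_of_lt (Nat.dvd_of_mem_primeFactors hs) (mem_range.mp hi), if_pos hm,
          mul_one]
        exact_mod_cast hci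
    _ ≤ ∑ i' ∈ range (n / s), (c s i' : ℤ) * cycVec n s i' m :=
        single_le_sum (fun i' _ => hterm s i') hi
    _ ≤ ∑ s' ∈ n.primeFactors, ∑ i' ∈ range (n / s'), (c s' i' : ℤ) * cycVec n s' i' m :=
        single_le_sum (fun s' _ => sum_nonneg fun i' _ => hterm s' i') hs
    _ = α m := by simp [hc, Finset.sum_apply]

lemma alphaVec_ne_zero {p q r G : ℕ} (hp : p.Prime) (hq : q.Prime) (hr : r.Prime) (hpq : p ≠ q)
    (hpr : p ≠ r) (hG : G ≠ 0) : alphaVec (p * q * r * G) p q r ≠ 0 := fun h0 => by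
  obtain ⟨m, hm⟩ := exists_fin_dvd_sub (prime_mul_mul_mul_pos hp hq hr hG) (2 * (q * r * G))
  have := (alphaFun_pos_iff hp hq hr hpq hpr hG).mpr (inSupport_two_mul hp hq hpq hr.ne_zero hG)
  rw [alphaFun_congr hm, ← alphaVec_apply hp hq hr hG, h0] at this
  exact lt_irrefl _ this

lemma alphaVec_not_pos_on_coset {p q r G : ℕ} (hp : p.Prime) (hq : q.Prime) (hr : r.Prime)
    (hpq : p ≠ q) (hpr : p ≠ r) (hqr : q ≠ r) (hG : G ≠ 0) {s : ℕ} (hs : s.Prime)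
    (hsn : s ∣ p * q * r * G) (i : ℕ) :
    ¬ ∀ m : Fin (p * q * r * G), ((p * q * r * G / s : ℕ) : ℤ) ∣ (m : ℤ) - i →
      0 < alphaVec (p * q * r * G) p q r m := by
  intro hpos
  refine not_forall_inSupport hp hq hr hpq hpr hqr hG hs hsn i fun k => ?_
  obtain ⟨m, hm⟩ :=
    exists_fin_dvd_sub (prime_mul_mul_mul_pos hp hq hr hG) (i + (p * q * r * G / s : ℕ) * k)
  rw [← alphaFun_pos_iff hp hq hr hpq hpr hG, alphaFun_congr hm, ← alphaVec_apply hp hq hr hG]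
  refine hpos m ?_
  have hdvd : ((p * q * r * G / s : ℕ) : ℤ) ∣ ((p * q * r * G : ℕ) : ℤ) :=
    Int.natCast_dvd_natCast.mpr (Nat.div_dvd_of_dvd hsn)
  rw [show (m : ℤ) - i = (p * q * r * G / s : ℕ) * k - (i + (p * q * r * G / s : ℕ) * k - m) by
    ring]
  exact dvd_sub (dvd_mul_right _ k) (hdvd.trans hm)

/-- If `n` has at least three distinct prime factors `p < q < r`, then the explicit vector
`α' = ∑_{j=2}^{p} v^(q)_{n_p j} + v^(r)_{n_p + n_q} − v^(p)_{n_q}` (indices mod the respective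
`n_d`) lies in `V_n ∩ (ℤ_{≥0})^n` but is not a `ℤ_{≥0}`-combination of the `v^(p')_i`. -/
theorem stmt6 (n : ℕ) (hn : 0 < n) (ζ : ℂ) (hζ : IsPrimitiveRoot ζ n)
    (p q r : ℕ) (hp : p.Prime) (hq : q.Prime) (hr : r.Prime)
    (hpn : p ∣ n) (hqn : q ∣ n) (hrn : r ∣ n) (hpq : p < q) (hqr : q < r)
    (α : Fin n → ℤ)
    (hα : α = ∑ j ∈ Finset.Icc 2 p, cycVec n q ((n / p * j) % (n / q))
        + cycVec n r ((n / p + n / q) % (n / r)) - cycVec n p ((n / q) % (n / p))) :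
    (∀ m : Fin n, 0 ≤ α m) ∧
    (∑ m : Fin n, (α m : ℂ) * ζ ^ (m : ℕ) = 0) ∧
    ¬ ∃ c : ℕ → ℕ → ℕ, α = ∑ p' ∈ n.primeFactors, ∑ i ∈ Finset.range (n / p'),
        (c p' i : ℤ) • cycVec n p' i := by
  have hpr : p ≠ r := (hpq.trans hqr).ne
  obtain rfl : α = alphaVec n p q r := hα
  obtain ⟨G, rfl⟩ := mul_mul_dvd_of_prime_dvd hp hq hr hpq.ne hpr hqr.ne hpn hqn hrn
  have hG : G ≠ 0 := by rintro rfl; simp at hn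
  refine ⟨fun m => alphaVec_apply hp hq hr hG m ▸ alphaFun_nonneg hp.two_le _,
    rootEval_alphaVec hζ hn hp hq hr hpn hqn hrn, ?_⟩
  rintro ⟨c, hc⟩
  obtain ⟨s, hs, i, hpos⟩ :=
    exists_forall_pos_of_eq_sum_cycVec hc (alphaVec_ne_zero hp hq hr hpq.ne hpr hG)
  exact alphaVec_not_pos_on_coset hp hq hr hpq.ne hpr hqr.ne hG (Nat.prime_of_mem_primeFactors hs)
    (Nat.dvd_of_mem_primeFactors hs) i hpos
end

section
/- If n has exactly two distinct prime factors p and q, then the vectors v^(p)_i for 0 ≤ i ≤ n_p - 1 together with v^(q)_i for 0 ≤ i ≤ n_q - n_{pq} - 1 form a basis of the ℚ-vector space V_n. -/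
open Module LinearMap Nat

theorem stdVecQ_eq_single {n k : ℕ} (hk : k < n) : stdVecQ n k = Pi.single ⟨k, hk⟩ 1 := by
  ext m
  simp [stdVecQ, Pi.single_apply, Fin.ext_iff]

theorem cycVecQ_apply {n d i : ℕ} (hdn : d ∣ n) (hi : i < n / d) (x : Fin n) :
    cycVecQ n d i x = if x % (n / d) = i then 1 else 0 := by
  have hm : 0 < n / d := by omega
  have hxd : x / (n / d) < d :=
    Nat.div_lt_of_lt_mul (by rw [Nat.div_mul_cancel hdn]; exact x.2)
  have key : ∀ j, (x : ℕ) = i + n / d * j ↔ x / (n / d) = j ∧ x % (n / d) = i := fun j => by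
    rw [Nat.div_mod_unique hm]
    simp [hi, eq_comm]
  simp only [cycVecQ, stdVecQ, Finset.sum_apply, key]
  split_ifs with h
  · simp [h, hxd]
  · simp [h]

theorem sum_smul_cycVecQ_apply {n d k : ℕ} (hdn : d ∣ n) (hk : k ≤ n / d) (c : Fin k → ℚ)
    (x : Fin n) :
    (∑ i : Fin k, c i • cycVecQ n d i) x =
      if h : x % (n / d) < k then c ⟨x % (n / d), h⟩ else 0 := by
  simp only [Finset.sum_apply, Pi.smul_apply, cycVecQ_apply hdn (lt_of_lt_of_le (Fin.is_lt _) hk),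
    smul_eq_mul, mul_ite, mul_one, mul_zero]
  split_ifs with h
  · rw [Finset.sum_eq_single_of_mem ⟨_, h⟩ (Finset.mem_univ _) fun i _ hi => if_neg fun e =>
      hi (Fin.ext e.symm)]
    simp
  · exact Finset.sum_eq_zero fun i _ => if_neg fun hi => h (by rw [hi]; exact i.2)

theorem exists_lt_mod_eq_and_sub_le_mod {n p q i : ℕ} (hn : 0 < n) (hpq : p.Coprime q)
    (hdvd : p * q ∣ n) (hi : i < n / p) :
    ∃ x < n, x % (n / p) = i ∧ n / q - n / (p * q) ≤ x % (n / q) := by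
  obtain ⟨M, rfl⟩ := hdvd
  obtain ⟨⟨hp, hq⟩, hM⟩ := by simpa only [CanonicallyOrderedAdd.mul_pos] using hn
  rw [show p * q * M / p = q * M by rw [mul_assoc, Nat.mul_div_cancel_left _ hp]] at hi ⊢
  rw [show p * q * M / q = p * M by rw [mul_comm p, mul_assoc, Nat.mul_div_cancel_left _ hq],
    Nat.mul_div_cancel_left _ (by positivity)]
  -- the residue of `i` mod `M`, moved into the last block of `M` residues mod `p * M`
  have hr : i ≡ M * (p - 1) + i % M [MOD (q * M).gcd (p * M)] := by
    rw [Nat.gcd_mul_right, hpq.symm, one_mul, Nat.ModEq, Nat.mul_add_mod, Nat.mod_mod]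
  have hlt := Nat.chineseRemainder'_lt_lcm hr (by positivity) (by positivity)
  rw [Nat.lcm_mul_right, hpq.symm.lcm_eq_mul] at hlt
  have hMp : M ≤ p * M := Nat.le_mul_of_pos_left M hp
  have hblock : M * (p - 1) + i % M < p * M := by
    have := Nat.mod_lt i hM
    rw [Nat.mul_sub_one, mul_comm M p]
    omega
  refine ⟨Nat.chineseRemainder' hr, by linarith, ?_, ?_⟩
  · exact Eq.trans (Nat.chineseRemainder' hr).2.1 (Nat.mod_eq_of_lt hi)
  · rw [(Nat.chineseRemainder' hr).2.2, Nat.mod_eq_of_lt hblock, Nat.mul_sub_one, mul_comm M p]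
    omega

theorem linearIndependent_cycVecQ {n p q : ℕ} (hn : 0 < n) (hpq : p.Coprime q)
    (hdvd : p * q ∣ n) :
    LinearIndependent ℚ (Sum.elim (fun i : Fin (n / p) => cycVecQ n p i)
      (fun j : Fin (n / q - n / (p * q)) => cycVecQ n q j)) := by
  have hpn : p ∣ n := (dvd_mul_right p q).trans hdvd
  have hqn : q ∣ n := (dvd_mul_left q p).trans hdvd
  have hnp : 0 < n / p := Nat.div_pos (Nat.le_of_dvd hn hpn) (Nat.pos_of_dvd_of_pos hpn hn)
  rw [Fintype.linearIndependent_iff]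
  intro g hg
  have hrel : ∀ x : Fin n, g (.inl ⟨x % (n / p), Nat.mod_lt _ hnp⟩) +
      (if h : x % (n / q) < n / q - n / (p * q) then g (.inr ⟨x % (n / q), h⟩) else 0) = 0 := by
    intro x
    have hx := congr_fun hg x
    rw [Fintype.sum_sum_type, Pi.add_apply, Pi.zero_apply] at hx
    simpa only [Sum.elim_inl, Sum.elim_inr, sum_smul_cycVecQ_apply hpn le_rfl,
      sum_smul_cycVecQ_apply hqn (Nat.sub_le _ _), dif_pos (Nat.mod_lt _ hnp)] using hx
  have hinl : ∀ i, g (.inl i) = 0 := by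
    intro i
    obtain ⟨x, hxn, hxp, hxq⟩ := exists_lt_mod_eq_and_sub_le_mod hn hpq hdvd i.2
    simpa [hxp, not_lt.2 hxq] using hrel ⟨x, hxn⟩
  have hinr : ∀ j, g (.inr j) = 0 := by
    intro j
    have hjq : (j : ℕ) < n / q := j.2.trans_le (Nat.sub_le _ _)
    simpa [Nat.mod_eq_of_lt hjq, hinl] using hrel ⟨j, hjq.trans_le (Nat.div_le_self n q)⟩
  rintro (i | j)
  exacts [hinl i, hinr j]

section PrimitiveRoot

variable {K : Type*} [Field K] [CharZero K] {ζ : K} {n : ℕ}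

theorem linearCombination_pow_cycVecQ (hζ : IsPrimitiveRoot ζ n) {d i : ℕ} (hdn : d ∣ n)
    (hd : 1 < d) (hi : i < n / d) :
    Fintype.linearCombination ℚ (fun x : Fin n => ζ ^ (x : ℕ)) (cycVecQ n d i) = 0 := by
  have hn : n = n / d * d := (Nat.div_mul_cancel hdn).symm
  have hlt : ∀ j ∈ Finset.range d, i + n / d * j < n := fun j hj => by
    calc i + n / d * j < n / d * (j + 1) := by rw [mul_add_one]; omega
      _ ≤ n / d * d := Nat.mul_le_mul_left _ (Finset.mem_range.1 hj)
      _ = n := hn.symm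
  calc Fintype.linearCombination ℚ (fun x : Fin n => ζ ^ (x : ℕ)) (cycVecQ n d i)
      = ∑ j ∈ Finset.range d, ζ ^ i * (ζ ^ (n / d)) ^ j := by
        rw [cycVecQ, map_sum]
        refine Finset.sum_congr rfl fun j hj => ?_
        rw [stdVecQ_eq_single (hlt j hj), Fintype.linearCombination_apply_single, one_smul,
          pow_add, pow_mul]
    _ = 0 := by
        have hroot := hζ.pow (Nat.pos_of_ne_zero (by rintro rfl; simp at hi)) hn
        rw [← Finset.mul_sum, hroot.geom_sum_eq_zero hd, mul_zero]

theorem finrank_ker_linearCombination_pow_le (hn : 0 < n) (hζ : IsPrimitiveRoot ζ n) :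
    finrank ℚ (ker (Fintype.linearCombination ℚ fun i : Fin n => ζ ^ (i : ℕ))) ≤ n - φ n := by
  set f := Fintype.linearCombination ℚ fun i : Fin n => ζ ^ (i : ℕ)
  have hdeg : (minpoly ℚ ζ).natDegree = φ n := by
    have : NeZero (n : ℚ) := ⟨by positivity⟩
    rw [← hζ.minpoly_eq_cyclotomic_of_irreducible (Polynomial.cyclotomic.irreducible_rat hn),
      Polynomial.natDegree_cyclotomic]
  have hpow : LinearIndependent ℚ fun i : Fin (φ n) => ζ ^ (i : ℕ) := by
    have := linearIndependent_pow (K := ℚ) ζ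
    rwa [hdeg] at this
  let b : Fin (φ n) → range f := fun i =>
    ⟨ζ ^ (i : ℕ), Pi.single ⟨i, i.2.trans_le (totient_le n)⟩ 1, by simp [f]⟩
  have hb : LinearIndependent ℚ b := LinearIndependent.of_comp (range f).subtype hpow
  have hrank := f.finrank_range_add_finrank_ker
  rw [finrank_fin_fun] at hrank
  have := hb.fintype_card_le_finrank
  rw [Fintype.card_fin] at this
  omega

end PrimitiveRoot

theorem mul_dvd_of_primeFactors_eq_pair {n p q : ℕ} (hfac : n.primeFactors = {p, q})
    (hne : p ≠ q) : p * q ∣ n := by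
  simpa [hfac, Finset.prod_pair hne] using Nat.prod_primeFactors_dvd n

theorem totient_add_div_add_div_sub_div {n p q : ℕ} (hfac : n.primeFactors = {p, q})
    (hne : p ≠ q) : φ n + (n / p + (n / q - n / (p * q))) = n := by
  have hp : p.Prime := Nat.prime_of_mem_primeFactors (show p ∈ n.primeFactors by simp [hfac])
  have hq : q.Prime := Nat.prime_of_mem_primeFactors (show q ∈ n.primeFactors by simp [hfac])
  have htot := Nat.totient_mul_prod_primeFactors n
  obtain ⟨M, rfl⟩ := mul_dvd_of_primeFactors_eq_pair hfac hne
  rw [hfac, Finset.prod_pair hne, Finset.prod_pair hne] at htot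
  obtain ⟨p, rfl⟩ := Nat.exists_eq_add_one.2 hp.pos
  obtain ⟨q, rfl⟩ := Nat.exists_eq_add_one.2 hq.pos
  have hφ : φ ((p + 1) * (q + 1) * M) = M * p * q := by
    apply Nat.eq_of_mul_eq_mul_right (Nat.mul_pos hp.pos hq.pos)
    rw [htot]
    simp only [Nat.add_sub_cancel]
    ring
  rw [hφ, Nat.div_eq_of_eq_mul_left hp.pos (by ring : _ = (q + 1) * M * (p + 1)),
    Nat.div_eq_of_eq_mul_left hq.pos (by ring : _ = (p + 1) * M * (q + 1)),
    Nat.mul_div_cancel_left _ (by positivity)]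
  ring_nf
  omega

/-- If `n` has exactly two distinct prime factors `p, q`, then the vectors `v^(p)_i`
(`0 ≤ i ≤ n_p - 1`) together with `v^(q)_i` (`0 ≤ i ≤ n_q - n_{pq} - 1`) form a basis of
the ℚ-vector space `V_n`. -/
theorem stmt9 (n p q : ℕ) (hn : 0 < n) (hp : p.Prime) (hq : q.Prime) (hne : p ≠ q)
    (hfac : n.primeFactors = {p, q})
    (ζ : ℂ) (hζ : IsPrimitiveRoot ζ n)
    (V : Submodule ℚ (Fin n → ℚ))
    (hV : ∀ α : Fin n → ℚ, α ∈ V ↔ ∑ i : Fin n, (α i : ℂ) * ζ ^ (i : ℕ) = 0)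
    (v : Fin (n / p) ⊕ Fin (n / q - n / (p * q)) → (Fin n → ℚ))
    (hv : v = Sum.elim (fun i : Fin (n / p) => cycVecQ n p (i : ℕ)) (fun i : Fin (n / q - n / (p * q)) => cycVecQ n q (i : ℕ))) :
    LinearIndependent ℚ v ∧ Submodule.span ℚ (Set.range v) = V := by
  subst hv
  have hdvd := mul_dvd_of_primeFactors_eq_pair hfac hne
  have hli := linearIndependent_cycVecQ hn ((Nat.coprime_primes hp hq).2 hne) hdvd
  have hV_eq : V = ker (Fintype.linearCombination ℚ fun i : Fin n => ζ ^ (i : ℕ)) := by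
    ext α
    simp [hV, Fintype.linearCombination_apply, Rat.smul_def]
  refine ⟨hli, Submodule.eq_of_le_of_finrank_le ?_ ?_⟩
  · rw [hV_eq, Submodule.span_le]
    rintro _ ⟨i | j, rfl⟩
    · exact linearCombination_pow_cycVecQ hζ ((dvd_mul_right p q).trans hdvd) hp.one_lt i.2
    · exact linearCombination_pow_cycVecQ hζ ((dvd_mul_left q p).trans hdvd) hq.one_lt
        (j.2.trans_le (Nat.sub_le _ _))
  · rw [hV_eq, finrank_span_eq_card hli, Fintype.card_sum, Fintype.card_fin, Fintype.card_fin]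
    exact (finrank_ker_linearCombination_pow_le hn hζ).trans
      (Nat.sub_eq_of_eq_add' (totient_add_div_add_div_sub_div hfac hne).symm).le
end

section
/- For any positive divisor p of n and 0 ≤ i ≤ n/p - 1, the monomial y^{v^(p)_i} = Π_{j=0}^{p-1} y_{i + (n/p)j} equals the circulant determinant Θ_p(y^(p)_i) of order p built from the variables y^(p)_{i,j} := Σ_{l=0}^{n/p - 1} ζ_n^{i(j + pl)} x_{j + pl} (0 ≤ j ≤ p-1). -/
/-!
The Fourier matrix `F = (ω^{jk})` of a primitive `p`-th root of unity `ω` diagonalizes every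
circulant matrix: `F · circ(a) = diag(â) · F` with `â_j = ∑_k ω^{jk} a_k`, and `F` is an invertible
Vandermonde matrix, so `Θ_p(a) = ∏_j â_j`. Writing the summation index of `y_{i+(n/p)j}` as
`m = k + p l` and using `ζ^n = 1` shows `y_{i+(n/p)j} = â_j` for `a = y^(p)_i` and `ω = ζ^{n/p}`.
-/

open MvPolynomial

/-- The eigenvariable `y_k = ∑_m ζ^{km} x_m`. -/
noncomputable def yEig (n : ℕ) [NeZero n] (ζ : ℂ) (k : ℕ) : MvPolynomial (ZMod n) ℂ :=
  ∑ m : ZMod n, C (ζ ^ (k * m.val)) * X m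

/-- The variable `y^(p)_{i,j} = ∑_{l<n/p} ζ^{i(j+pl)} x_{j+pl}`. -/
noncomputable def ypVar (n p : ℕ) [NeZero n] (ζ : ℂ) (i j : ℕ) :
    MvPolynomial (ZMod n) ℂ :=
  ∑ l ∈ Finset.range (n / p), C (ζ ^ (i * (j + p * l))) * X ((j + p * l : ℕ) : ZMod n)

/-- The circulant determinant of order `p` with first column `a_0, …, a_{p-1}`. -/
def thetaCirc {R : Type*} [CommRing R] (p : ℕ) (a : ℕ → R) : R :=
  (Matrix.circulant fun j : Fin p => a (j : ℕ)).det

open Finset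

lemma pow_val_add_of_pow_eq_one {M : Type*} [Monoid M] {ω : M} {p : ℕ} (hω : ω ^ p = 1)
    (x y : Fin p) :
    ω ^ (x + y).val = ω ^ x.val * ω ^ y.val := by
  rw [Fin.val_add, ← pow_eq_pow_mod _ hω, pow_add]

section Circulant

variable {R : Type*} [CommRing R] {p : ℕ} [NeZero p] {ω : R}

namespace Matrix

lemma vandermonde_mul_circulant (hω : ω ^ p = 1) (a : Fin p → R) :
    vandermonde (fun j : Fin p => ω ^ j.val) * circulant a
      = diagonal (fun j : Fin p => ∑ k : Fin p, ω ^ (j.val * k.val) * a k)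
        * vandermonde (fun j : Fin p => ω ^ j.val) := by
  ext j m
  rw [mul_apply, diagonal_mul, sum_mul]
  refine (Fintype.sum_equiv (Equiv.addRight m) _ _ fun k => ?_).symm
  have hωj : (ω ^ j.val) ^ p = 1 := by rw [pow_right_comm, hω, one_pow]
  simp only [vandermonde_apply, circulant_apply, Equiv.coe_addRight,
    add_sub_cancel_right, pow_val_add_of_pow_eq_one hωj, ← pow_mul]
  ring

lemma det_circulant [IsDomain R] (hω : IsPrimitiveRoot ω p) (a : Fin p → R) :
    (circulant a).det = ∏ j : Fin p, ∑ k : Fin p, ω ^ (j.val * k.val) * a k := by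
  have hF : (vandermonde (fun j : Fin p => ω ^ j.val)).det ≠ 0 :=
    det_vandermonde_ne_zero_iff.mpr fun j k hjk =>
      Fin.val_injective (hω.pow_inj j.is_lt k.is_lt hjk)
  have h := congrArg det (vandermonde_mul_circulant hω.pow_eq_one a)
  rw [det_mul, det_mul, det_diagonal, mul_comm] at h
  exact mul_right_cancel₀ hF h

end Matrix

lemma thetaCirc_eq_prod_sum [IsDomain R] (hω : IsPrimitiveRoot ω p) (a : ℕ → R) :
    thetaCirc p a = ∏ j ∈ range p, ∑ k ∈ range p, ω ^ (j * k) * a k := by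
  rw [thetaCirc, Matrix.det_circulant hω, ← Fin.prod_univ_eq_prod_range]
  exact prod_congr rfl fun j _ => Fin.sum_univ_eq_sum_range (fun k => ω ^ (j.val * k) * a k) p

end Circulant

lemma ZMod.sum_eq_sum_range {A : Type*} [AddCommMonoid A] (n : ℕ) [NeZero n] (f : ZMod n → A) :
    ∑ m : ZMod n, f m = ∑ m ∈ range n, f m :=
  sum_nbij' (i := fun m => m.val) (j := fun m => (m : ZMod n))
    (fun m _ => mem_range.mpr m.val_lt) (fun _ _ => mem_univ _)
    (fun m _ => ZMod.natCast_zmod_val m)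
    (fun _ hm => ZMod.val_natCast_of_lt (mem_range.mp hm))
    (fun m _ => by rw [ZMod.natCast_zmod_val])

lemma Finset.sum_range_mul {A : Type*} [AddCommMonoid A] (p q : ℕ) (f : ℕ → A) :
    ∑ m ∈ range (p * q), f m = ∑ k ∈ range p, ∑ l ∈ range q, f (k + p * l) := by
  induction q with
  | zero => simp
  | succ q ih =>
    rw [Nat.mul_succ, sum_range_add, ih, ← sum_add_distrib]
    simp only [sum_range_succ, add_comm (p * q)]

lemma yEig_eq_sum_range (n : ℕ) [NeZero n] (ζ : ℂ) (k : ℕ) :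
    yEig n ζ k = ∑ m ∈ range n, C (ζ ^ (k * m)) * X (m : ZMod n) := by
  rw [yEig, ZMod.sum_eq_sum_range]
  refine sum_congr rfl fun m hm => ?_
  rw [ZMod.val_natCast_of_lt (mem_range.mp hm)]

lemma yEig_add_mul_eq_sum_ypVar {n p : ℕ} [NeZero n] (hpn : p ∣ n) {ζ : ℂ} (hζ : ζ ^ n = 1)
    (i j : ℕ) :
    yEig n ζ (i + n / p * j) = ∑ k ∈ range p, C (ζ ^ (n / p)) ^ (j * k) * ypVar n p ζ i k := by
  set q := n / p
  have hn : n = p * q := (Nat.mul_div_cancel' hpn).symm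
  rw [yEig_eq_sum_range, show range n = range (p * q) by rw [← hn], sum_range_mul]
  refine sum_congr rfl fun k _ => ?_
  rw [ypVar, mul_sum]
  refine sum_congr rfl fun l _ => ?_
  have hexp : (i + q * j) * (k + p * l) = q * (j * k) + i * (k + p * l) + n * (j * l) := by
    rw [hn]; ring
  rw [← mul_assoc, ← C_pow, ← C_mul, ← pow_mul, ← pow_add, hexp, pow_add, pow_mul ζ n, hζ,
    one_pow, mul_one]

theorem stmt12_general (n p : ℕ) [NeZero n] [NeZero p] (hpn : p ∣ n)
    (ζ : ℂ) (hζ : IsPrimitiveRoot ζ n) (i : ℕ) :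
    ∏ j ∈ Finset.range p, yEig n ζ (i + (n / p) * j)
      = thetaCirc p (fun j => ypVar n p ζ i j) := by
  have hω : IsPrimitiveRoot (C (ζ ^ (n / p)) : MvPolynomial (ZMod n) ℂ) p :=
    (hζ.pow (NeZero.pos n) (Nat.div_mul_cancel hpn).symm).map_of_injective (C_injective _ _)
  rw [thetaCirc_eq_prod_sum hω]
  exact prod_congr rfl fun j _ => yEig_add_mul_eq_sum_ypVar hpn hζ.pow_eq_one i j

/-- For `p ∣ n` and `0 ≤ i < n/p`, the monomial `y^{v^(p)_i} = ∏_{j<p} y_{i+(n/p)j}`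
equals the circulant determinant `Θ_p(y^(p)_i)`. -/
theorem stmt12 (n p : ℕ) [NeZero n] [NeZero p] (hpn : p ∣ n)
    (ζ : ℂ) (hζ : IsPrimitiveRoot ζ n) (i : ℕ) (hi : i < n / p) :
    ∏ j ∈ Finset.range p, yEig n ζ (i + (n / p) * j)
      = thetaCirc p (fun j => ypVar n p ζ i j) :=
  stmt12_general n p hpn ζ hζ i
end

section
/- For a prime p dividing n, the polynomials Θ_p(y^(p)_0), ..., Θ_p(y^(p)_{n_p - 1}) are algebraically independent over ℂ; equivalently, the ring homomorphism ρ : ℂ[z_0,...,z_{n_p-1}] → ℂ[x_0,...,x_{n-1}] with ρ(z_i) = Θ_p(y^(p)_i) is injective. -/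
open MvPolynomial

/-!
Substituting for `x` a suitable inverse discrete Fourier transform gives a left inverse of `ρ`.
Since `Θ_p(y^(p)_i) = ∏_{j<p} y_{i + n_p j}` with `y_m = ∑_v ζ^{mv} x_v`, and the `y_m` are an
invertible linear change of variables, it suffices to send `y_i ↦ X_i` for `i < n_p` and every
other `y_m ↦ 1`. Concretely this substitution sends `y^(p)_{i,j}` to `δ_{j0} + (X_i - 1)/p`, and
the circulant determinant with first column `δ_{j0} + c` is `1 + p c`, which is `X_i` for
`c = (X_i - 1)/p`.
-/

open Finset

theorem IsPrimitiveRoot.sum_range_pow_mul_inv_pow {K : Type*} [Field K] {η : K} {q : ℕ}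
    (hη : IsPrimitiveRoot η q) {i k : ℕ} (hi : i < q) (hk : k < q) :
    ∑ l ∈ range q, (η ^ i * η⁻¹ ^ k) ^ l = if i = k then (q : K) else 0 := by
  have hη0 : η ≠ 0 := hη.ne_zero (by omega)
  split_ifs with hik
  · simp [hik, mul_inv_cancel₀ (pow_ne_zero k hη0)]
  · have hne : η ^ i * η⁻¹ ^ k ≠ 1 := by
      rw [inv_pow, Ne, mul_inv_eq_one₀ (pow_ne_zero _ hη0)]
      exact fun h => hik (hη.pow_inj hi hk h)
    have hq : (η ^ i * η⁻¹ ^ k) ^ q = 1 := by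
      rw [mul_pow, ← pow_mul, ← pow_mul, mul_comm i, mul_comm k, pow_mul, pow_mul,
        hη.pow_eq_one, hη.inv.pow_eq_one, one_pow, one_pow, one_mul]
    rw [geom_sum_eq hne, hq, sub_self, zero_div]

theorem map_thetaCirc {R S F : Type*} [CommRing R] [CommRing S] [FunLike F R S]
    [RingHomClass F R S] (f : F) {p : ℕ} {a : ℕ → R} {b : ℕ → S}
    (h : ∀ j < p, f (a j) = b j) : f (thetaCirc p a) = thetaCirc p b := by
  change (f : R →+* S) (thetaCirc p a) = _
  rw [thetaCirc, RingHom.map_det, RingHom.mapMatrix_apply, Matrix.map_circulant]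
  exact congrArg _ (congrArg _ (funext fun j => h j j.isLt))

theorem thetaCirc_ite_add_const {R : Type*} [CommRing R] (p : ℕ) (c : R) :
    thetaCirc p (fun j => (if j = 0 then 1 else 0) + c) = 1 + p * c := by
  have hcirc : Matrix.circulant (fun j : Fin p => (if (j : ℕ) = 0 then 1 else 0) + c) =
      1 + Matrix.replicateCol (Fin 1) (fun _ : Fin p => c) *
        Matrix.replicateRow (Fin 1) (fun _ : Fin p => (1 : R)) := by
    ext a b
    have : NeZero p := ⟨a.pos.ne'⟩
    simp [Matrix.circulant_apply, Matrix.one_apply, Fin.val_eq_zero_iff, sub_eq_zero,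
      Matrix.mul_apply]
  unfold thetaCirc
  rw [hcirc]
  exact (Matrix.det_one_add_replicateCol_mul_replicateRow _ _).trans (by simp [dotProduct])

/- The inverse DFT of `t : ZMod n → _` with `t m = X m` for `m < q` and `t m = 1` otherwise
(the inverse DFT of the constant `1` is `δ_0`), so that `y_m = ∑ ζ^{mv} x_v` goes to `t m`. -/
noncomputable def invDFTSubst (n q : ℕ) (ζ : ℂ) (v : ZMod n) : MvPolynomial (Fin q) ℂ :=
  (if v = 0 then 1 else 0) + C (n : ℂ)⁻¹ * ∑ k : Fin q, C (ζ⁻¹ ^ ((k : ℕ) * v.val)) * (X k - 1)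

section

variable {n p : ℕ} [NeZero n]

theorem IsPrimitiveRoot.sum_pow_mul_inv_pow_add_mul {K : Type*} [Field K] {ζ : K}
    (hζ : IsPrimitiveRoot ζ n) (hpn : p ∣ n) {i k : ℕ}
    (hi : i < n / p) (hk : k < n / p) (j : ℕ) :
    ∑ l ∈ range (n / p), ζ ^ (i * (j + p * l)) * ζ⁻¹ ^ (k * (j + p * l)) =
      if i = k then ((n / p : ℕ) : K) else 0 := by
  obtain ⟨q, rfl⟩ := hpn
  have hp : p ≠ 0 := left_ne_zero_of_mul (NeZero.ne (p * q))
  rw [Nat.mul_div_cancel_left q hp.bot_lt] at hi hk ⊢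
  have hη : IsPrimitiveRoot (ζ ^ p) q := hζ.pow (NeZero.pos _) rfl
  have hsplit : ∀ l, ζ ^ (i * (j + p * l)) * ζ⁻¹ ^ (k * (j + p * l)) =
      (ζ ^ i * ζ⁻¹ ^ k) ^ j * ((ζ ^ p) ^ i * (ζ ^ p)⁻¹ ^ k) ^ l := fun l => by ring
  rw [sum_congr rfl fun l _ => hsplit l, ← mul_sum, hη.sum_range_pow_mul_inv_pow hi hk]
  split_ifs with hik
  · simp [hik, mul_inv_cancel₀ (pow_ne_zero k (hζ.ne_zero (NeZero.ne _)))]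
  · exact mul_zero _

theorem aeval_invDFTSubst_ypVar {ζ : ℂ} (hpn : p ∣ n) (hζ : IsPrimitiveRoot ζ n)
    (i : Fin (n / p)) {j : ℕ} (hj : j < p) :
    aeval (invDFTSubst n (n / p) ζ) (ypVar n p ζ i j) =
      (if j = 0 then 1 else 0) + C (p : ℂ)⁻¹ * (X i - 1) := by
  have hlt : ∀ l ∈ range (n / p), j + p * l < n := fun l hl => by
    rw [mem_range] at hl
    nlinarith [Nat.mul_div_cancel' hpn]
  have hδ : ∑ l ∈ range (n / p),
      C (ζ ^ ((i : ℕ) * (j + p * l))) * (if ((j + p * l : ℕ) : ZMod n) = 0 then 1 else 0) =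
        (if j = 0 then 1 else 0 : MvPolynomial (Fin (n / p)) ℂ) := by
    have hzero : ∀ l ∈ range (n / p), ((j + p * l : ℕ) : ZMod n) = 0 ↔ j = 0 ∧ l = 0 :=
      fun l hl => by
        have hdvd : n ∣ j + p * l ↔ j + p * l = 0 :=
          ⟨fun h => Nat.eq_zero_of_dvd_of_lt h (hlt l hl), fun h => h ▸ dvd_zero n⟩
        rw [ZMod.natCast_eq_zero_iff, hdvd]
        simp [(Nat.zero_lt_of_lt hj).ne']
    rw [sum_eq_single_of_mem 0 (mem_range.2 i.pos)]
    · simp only [hzero 0 (mem_range.2 i.pos), and_true]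
      split_ifs with hj0 <;> simp [hj0]
    · intro l hl hl0
      simp only [hzero l hl, hl0, and_false, if_false, mul_zero]
  calc aeval (invDFTSubst n (n / p) ζ) (ypVar n p ζ i j)
      = ∑ l ∈ range (n / p), C (ζ ^ ((i : ℕ) * (j + p * l))) *
          ((if ((j + p * l : ℕ) : ZMod n) = 0 then 1 else 0) + C (n : ℂ)⁻¹ *
            ∑ k : Fin (n / p), C (ζ⁻¹ ^ ((k : ℕ) * (j + p * l))) * (X k - 1)) := by
        simp only [ypVar, invDFTSubst, map_sum, map_mul, aeval_C, aeval_X, algebraMap_eq]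
        exact sum_congr rfl fun l hl => by rw [ZMod.val_natCast_of_lt (hlt l hl)]
    _ = (if j = 0 then 1 else 0) + C (n : ℂ)⁻¹ * ∑ k : Fin (n / p), C (∑ l ∈ range (n / p),
          ζ ^ ((i : ℕ) * (j + p * l)) * ζ⁻¹ ^ ((k : ℕ) * (j + p * l))) * (X k - 1) := by
        rw [← hδ]
        simp only [mul_add, sum_add_distrib, mul_sum, map_sum, sum_mul, map_mul]
        congr 1
        rw [sum_comm]
        exact sum_congr rfl fun _ _ => sum_congr rfl fun _ _ => by ring
    _ = (if j = 0 then 1 else 0) + C (p : ℂ)⁻¹ * (X i - 1) := by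
        simp only [hζ.sum_pow_mul_inv_pow_add_mul hpn i.isLt (Fin.isLt _), Fin.val_inj,
          apply_ite C, map_zero, ite_mul, zero_mul, sum_ite_eq, mem_univ, if_true]
        have hp : (p : ℂ) ≠ 0 := Nat.cast_ne_zero.2 (Nat.zero_lt_of_lt hj).ne'
        have hn : (n : ℂ) ≠ 0 := Nat.cast_ne_zero.2 (NeZero.ne n)
        rw [← mul_assoc, ← C_mul, Nat.cast_div hpn hp, inv_mul_eq_div, div_div_cancel_left' hn]

theorem aeval_invDFTSubst_thetaCirc {ζ : ℂ} (hpn : p ∣ n) (hζ : IsPrimitiveRoot ζ n)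
    (i : Fin (n / p)) :
    aeval (invDFTSubst n (n / p) ζ) (thetaCirc p fun j => ypVar n p ζ i j) = X i := by
  have hp : (p : ℂ) ≠ 0 := by
    rintro hp0
    exact NeZero.ne n (zero_dvd_iff.1 (Nat.cast_eq_zero.1 hp0 ▸ hpn))
  rw [map_thetaCirc _ fun j hj => aeval_invDFTSubst_ypVar hpn hζ i hj, thetaCirc_ite_add_const,
    ← map_natCast C, ← mul_assoc, ← C_mul, mul_inv_cancel₀ hp, C_1, one_mul, add_sub_cancel]

end

theorem stmt16_general (n p : ℕ) [NeZero n] (hpn : p ∣ n)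
    (ζ : ℂ) (hζ : IsPrimitiveRoot ζ n) :
    Function.Injective
      (aeval (R := ℂ)
        (fun i : Fin (n / p) => thetaCirc p (fun j => ypVar n p ζ (i : ℕ) j)) :
        MvPolynomial (Fin (n / p)) ℂ →ₐ[ℂ] MvPolynomial (ZMod n) ℂ) := by
  have hleft : (aeval (invDFTSubst n (n / p) ζ)).comp
      (aeval fun i : Fin (n / p) => thetaCirc p fun j => ypVar n p ζ i j) = AlgHom.id ℂ _ :=
    algHom_ext fun i => by
      rw [AlgHom.comp_apply, aeval_X, aeval_invDFTSubst_thetaCirc hpn hζ, AlgHom.id_apply]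
  exact Function.LeftInverse.injective (g := aeval (invDFTSubst n (n / p) ζ))
    (AlgHom.congr_fun hleft)

/-- For a prime `p ∣ n`, the circulant determinants `Θ_p(y^(p)_0), …, Θ_p(y^(p)_{n_p-1})`
are algebraically independent over ℂ: the map `ρ(z_i) = Θ_p(y^(p)_i)` is injective. -/
theorem stmt16 (n p : ℕ) [NeZero n] (hp : p.Prime) (hpn : p ∣ n)
    (ζ : ℂ) (hζ : IsPrimitiveRoot ζ n) :
    Function.Injective
      (aeval (R := ℂ)
        (fun i : Fin (n / p) => thetaCirc p (fun j => ypVar n p ζ (i : ℕ) j)) :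
        MvPolynomial (Fin (n / p)) ℂ →ₐ[ℂ] MvPolynomial (ZMod n) ℂ) :=
  stmt16_general n p hpn ζ hζ
end
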